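/- Rec unfold: let Rec X. R := ∀X.((R ⊆ X) ⇒ X). If X occurs only positively in R (X ∈⁺ R), then ⟦Rec X. R⟧_γ ⊆ ⟦[Rec X. R / X]R⟧_γ; combined with the fold direction ⟦[Rec X. R / X]R⟧_γ ⊆ ⟦Rec X. R⟧_γ, the recursive type equals its unfolding: ⟦Rec X. R⟧_γ = ⟦[Rec X. R / X]R⟧_γ. -/

import Mathlib

/-!
Write `F r := ⟦R⟧_{γ[X ↦ r]}`; positivity of `X` makes `F` monotone, and `⟦Rec X. R⟧_γ` is
the intersection `μ` of all βη-closed relations `r` with `F r ⊆ r`. As in Knaster–Tarski,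
`F μ ⊆ F r ⊆ r` for each such `r`, so `F μ ⊆ μ`; then monotonicity gives `F (F μ) ⊆ F μ`, and
`F μ` is βη-closed, so `μ ⊆ F μ`. The substitution lemma identifies `F μ` with `⟦[Rec X. R / X]R⟧_γ`.
-/

namespace RelTT

/-- Untyped lambda terms (de Bruijn indices). -/
inductive Term : Type
  | var : ℕ → Term
  | lam : Term → Term
  | app : Term → Term → Term

namespace Term

/-- Lift free variables ≥ c by one. -/
def lift : Term → ℕ → Term
  | var k, c => if k < c then var k else var (k+1)
  | lam t, c => lam (lift t (c+1))
  | app t u, c => app (lift t c) (lift u c)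

/-- Capture-avoiding substitution of `s` for variable `n`. -/
def subst : Term → ℕ → Term → Term
  | var k, n, s => if k = n then s else if n < k then var (k-1) else var k
  | lam t, n, s => lam (subst t (n+1) (lift s 0))
  | app t u, n, s => app (subst t n s) (subst u n s)

end Term

/-- βη-equivalence of untyped lambda terms. -/
inductive Beq : Term → Term → Prop
  | beta (t u : Term) : Beq (Term.app (Term.lam t) u) (Term.subst t 0 u)
  | eta (t : Term) : Beq (Term.lam (Term.app (Term.lift t 0) (Term.var 0))) t
  | refl (t : Term) : Beq t t
  | symm {t u} : Beq t u → Beq u t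
  | trans {t u v} : Beq t u → Beq u v → Beq t v
  | appCongr {t t' u u'} : Beq t t' → Beq u u' → Beq (Term.app t u) (Term.app t' u')
  | lamCongr {t t'} : Beq t t' → Beq (Term.lam t) (Term.lam t')

/-- Binary relations on terms. -/
abbrev Rel := Term → Term → Prop

/-- A relation is βη-closed iff it respects βη-equivalence on both sides. -/
def BetaEtaClosed (r : Rel) : Prop :=
  ∀ t₁ t₂ t₁' t₂', r t₁ t₂ → Beq t₁' t₁ → Beq t₂' t₂ → r t₁' t₂'

/-- Relational types of RelTT (type variables are de Bruijn indices). -/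
inductive Ty : Type
  | var : ℕ → Ty
  | arrow : Ty → Ty → Ty
  | all : Ty → Ty
  | conv : Ty → Ty
  | comp : Ty → Ty → Ty
  | prom : Term → Ty

/-- Environments map type variables to relations. -/
abbrev Env := ℕ → Rel

def Env.cons (r : Rel) (γ : Env) : Env
  | 0 => r
  | n+1 => γ n

/-- The relational semantics of types. -/
def interp : Ty → Env → Rel
  | Ty.var n, γ => γ n
  | Ty.arrow R R', γ => fun t t' =>
      ∀ a a', interp R γ a a' → interp R' γ (Term.app t a) (Term.app t' a')
  | Ty.all R, γ => fun t t' =>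
      ∀ r : Rel, BetaEtaClosed r → interp R (Env.cons r γ) t t'
  | Ty.conv R, γ => fun t t' => interp R γ t' t
  | Ty.comp R R', γ => fun t t' => ∃ u, interp R γ t u ∧ interp R' γ u t'
  | Ty.prom tm, γ => fun t t' => Beq (Term.app tm t) t'

/-- All relations in the environment are βη-closed. -/
def EnvClosed (γ : Env) : Prop := ∀ n, BetaEtaClosed (γ n)

def I : Term := Term.lam (Term.var 0)
def K : Term := Term.lam (Term.lam (Term.var 1))

/-- Lift type variables ≥ c by one. -/
def liftTy : Ty → ℕ → Ty
  | Ty.var k, c => if k < c then Ty.var k else Ty.var (k+1)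
  | Ty.arrow R R', c => Ty.arrow (liftTy R c) (liftTy R' c)
  | Ty.all R, c => Ty.all (liftTy R (c+1))
  | Ty.conv R, c => Ty.conv (liftTy R c)
  | Ty.comp R R', c => Ty.comp (liftTy R c) (liftTy R' c)
  | Ty.prom t, _ => Ty.prom t

/-- Capture-avoiding substitution of type S for type variable n. -/
def substTy : Ty → ℕ → Ty → Ty
  | Ty.var k, n, S => if k = n then S else if n < k then Ty.var (k-1) else Ty.var k
  | Ty.arrow R R', n, S => Ty.arrow (substTy R n S) (substTy R' n S)
  | Ty.all R, n, S => Ty.all (substTy R (n+1) (liftTy S 0))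
  | Ty.conv R, n, S => Ty.conv (substTy R n S)
  | Ty.comp R R', n, S => Ty.comp (substTy R n S) (substTy R' n S)
  | Ty.prom t, _, _ => Ty.prom t

/-- Internalized subset type: R ⊆ R' := (K I)·(R → R')·(K I)^∪. -/
def Ty.sub (R R' : Ty) : Ty :=
  Ty.comp (Ty.prom (Term.app K I)) (Ty.comp (Ty.arrow R R') (Ty.conv (Ty.prom (Term.app K I))))

/-- Implicit product: R ⇒ R' := K·(R → R')·K^∪. -/
def Ty.imp (R R' : Ty) : Ty :=
  Ty.comp (Ty.prom K) (Ty.comp (Ty.arrow R R') (Ty.conv (Ty.prom K)))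

/-- Polarities. -/
inductive Pol | pos | neg

/-- The opposite polarity. -/
def Pol.flip : Pol → Pol
  | .pos => .neg
  | .neg => .pos

/-- X ∈ᵖ R : type variable n occurs only with polarity p in R. -/
inductive OccPol : Pol → ℕ → Ty → Prop
  | varEq (n) : OccPol .pos n (Ty.var n)
  | varNe (p n m) : m ≠ n → OccPol p n (Ty.var m)
  | arrow {p n R R'} : OccPol p.flip n R → OccPol p n R' → OccPol p n (Ty.arrow R R')
  | all {p n R} : OccPol p (n+1) R → OccPol p n (Ty.all R)
  | conv {p n R} : OccPol p n R → OccPol p n (Ty.conv R)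
  | comp {p n R R'} : OccPol p n R → OccPol p n R' → OccPol p n (Ty.comp R R')
  | prom (p n t) : OccPol p n (Ty.prom t)

/-- Positive-recursive type: Rec X. R := ∀X.((R ⊆ X) ⇒ X). -/
def recTy (R : Ty) : Ty := Ty.all (Ty.imp (Ty.sub R (Ty.var 0)) (Ty.var 0))

namespace Env

/-- The environment `γ` with `r` inserted at position `n`, shifting the later entries up. -/
def insert : ℕ → Rel → Env → Env
  | 0, r, γ => Env.cons r γ
  | n + 1, r, γ => Env.cons (γ 0) (insert n r fun k => γ (k + 1))

theorem cons_insert (s r : Rel) (n : ℕ) (γ : Env) :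
    Env.cons s (insert n r γ) = insert (n + 1) r (Env.cons s γ) :=
  rfl

theorem insert_self (n : ℕ) (r : Rel) (γ : Env) : insert n r γ n = r := by
  induction n generalizing γ with
  | zero => rfl
  | succ n ih => exact ih _

theorem insert_of_lt {n k : ℕ} (h : k < n) (r : Rel) (γ : Env) : insert n r γ k = γ k := by
  induction n generalizing k γ with
  | zero => omega
  | succ n ih =>
    cases k with
    | zero => rfl
    | succ k => exact ih (by omega) _

theorem insert_of_gt {n k : ℕ} (h : n < k) (r : Rel) (γ : Env) :
    insert n r γ k = γ (k - 1) := by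
  induction n generalizing k γ with
  | zero =>
    obtain ⟨k, rfl⟩ := Nat.exists_eq_add_one_of_ne_zero (by omega : k ≠ 0)
    rfl
  | succ n ih =>
    obtain ⟨k, rfl⟩ := Nat.exists_eq_add_one_of_ne_zero (by omega : k ≠ 0)
    refine (ih (by omega) _).trans ?_
    congr 1
    omega

theorem insert_of_ne {n k : ℕ} (h : k ≠ n) (r r' : Rel) (γ : Env) :
    insert n r γ k = insert n r' γ k := by
  rcases Nat.lt_or_gt_of_ne h with h | h
  · rw [insert_of_lt h, insert_of_lt h]
  · rw [insert_of_gt h, insert_of_gt h]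

end Env

theorem interp_liftTy (R : Ty) (c : ℕ) (r : Rel) (γ : Env) :
    interp (liftTy R c) (Env.insert c r γ) = interp R γ := by
  induction R generalizing c γ with
  | var k =>
    by_cases h : k < c
    · simp only [liftTy, h, if_true, interp, Env.insert_of_lt h]
    · simp only [liftTy, h, if_false, interp, Env.insert_of_gt (by omega : c < k + 1),
        Nat.add_sub_cancel]
  | all R ih => simp only [liftTy, interp, Env.cons_insert, ih]
  | _ => simp only [liftTy, interp, *]

theorem interp_substTy (R : Ty) (n : ℕ) (S : Ty) (γ : Env) :
    interp (substTy R n S) γ = interp R (Env.insert n (interp S γ) γ) := by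
  induction R generalizing n S γ with
  | var k =>
    rcases lt_trichotomy k n with h | rfl | h
    · simp only [substTy, h.ne, h.not_gt, if_false, interp, Env.insert_of_lt h]
    · simp only [substTy, if_true, interp, Env.insert_self]
    · simp only [substTy, h.ne', h, if_true, if_false, interp, Env.insert_of_gt h]
  | all R ih =>
    have hlift (s : Rel) : interp (liftTy S 0) (Env.cons s γ) = interp S γ := interp_liftTy S 0 s γ
    simp only [substTy, interp, ih, hlift, Env.cons_insert]
  | _ => simp only [substTy, interp, *]

theorem interp_substTy_zero (R S : Ty) (γ : Env) :
    interp (substTy R 0 S) γ = interp R (Env.cons (interp S γ) γ) :=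
  interp_substTy R 0 S γ

theorem EnvClosed.cons {r : Rel} {γ : Env} (hr : BetaEtaClosed r) (hγ : EnvClosed γ) :
    EnvClosed (Env.cons r γ)
  | 0 => hr
  | n + 1 => hγ n

theorem betaEtaClosed_interp (R : Ty) {γ : Env} (hγ : EnvClosed γ) :
    BetaEtaClosed (interp R γ) := by
  induction R generalizing γ with
  | var k => exact hγ k
  | arrow R R' _ ih' =>
    intro t₁ t₂ t₁' t₂' h h₁ h₂ a a' ha
    exact ih' hγ _ _ _ _ (h a a' ha) (h₁.appCongr (.refl a)) (h₂.appCongr (.refl a'))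
  | all R ih =>
    intro t₁ t₂ t₁' t₂' h h₁ h₂ r hr
    exact ih (hγ.cons hr) _ _ _ _ (h r hr) h₁ h₂
  | conv R ih =>
    intro t₁ t₂ t₁' t₂' h h₁ h₂
    exact ih hγ _ _ _ _ h h₂ h₁
  | comp R R' ih ih' =>
    rintro t₁ t₂ t₁' t₂' ⟨u, hu, hu'⟩ h₁ h₂
    exact ⟨u, ih hγ _ _ _ _ hu h₁ (.refl u), ih' hγ _ _ _ _ hu' (.refl u) h₂⟩
  | prom tm =>
    intro t₁ t₂ t₁' t₂' h h₁ h₂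
    exact ((Beq.refl tm).appCongr h₁).trans (h.trans h₂.symm)

def Pol.Le : Pol → Rel → Rel → Prop
  | .pos, r, r' => r ≤ r'
  | .neg, r, r' => r' ≤ r

theorem Pol.flip_le_iff (p : Pol) (r r' : Rel) : p.flip.Le r' r ↔ p.Le r r' := by
  cases p <;> rfl

theorem interp_insert_le_of_occPol {p : Pol} {n : ℕ} {R : Ty} (h : OccPol p n R) {r r' : Rel}
    (hr : p.Le r r') (γ : Env) : interp R (Env.insert n r γ) ≤ interp R (Env.insert n r' γ) := by
  induction h generalizing r r' γ with
  | varEq n =>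
    simpa only [interp, Env.insert_self, Pol.Le] using hr
  | varNe p n m hne =>
    simp only [interp, Env.insert_of_ne hne r r' γ, le_refl]
  | arrow _ _ ih ih' =>
    have hr_flip := (Pol.flip_le_iff _ _ _).2 hr
    exact fun t t' ht a a' ha => ih' hr γ _ _ (ht a a' (ih hr_flip γ a a' ha))
  | all _ ih =>
    exact fun t t' ht s hs => ih hr (Env.cons s γ) t t' (ht s hs)
  | conv _ ih =>
    exact fun t t' ht => ih hr γ t' t ht
  | comp _ _ ih ih' =>
    rintro t t' ⟨u, hu, hu'⟩
    exact ⟨u, ih hr γ t u hu, ih' hr γ u t' hu'⟩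
  | prom => exact le_rfl

theorem monotone_interp_cons {R : Ty} (hR : OccPol .pos 0 R) (γ : Env) :
    Monotone fun r => interp R (Env.cons r γ) :=
  fun _ _ hr => interp_insert_le_of_occPol hR hr γ

theorem Term.subst_lift (t : Term) (n : ℕ) (s : Term) : (t.lift n).subst n s = t := by
  induction t generalizing n s with
  | var k =>
    by_cases h : k < n
    · simp [Term.lift, Term.subst, h, h.ne, h.not_gt]
    · simp [Term.lift, Term.subst, h, show k + 1 ≠ n by omega, show n < k + 1 by omega]
  | lam t ih => simp [Term.lift, Term.subst, ih]
  | app t u ih ih' => simp [Term.lift, Term.subst, ih, ih']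

theorem beq_I_app (a : Term) : Beq (Term.app I a) a :=
  .beta (Term.var 0) a

theorem beq_K_app (a b : Term) : Beq (Term.app (Term.app K a) b) a := by
  have hKa : Beq (Term.app K a) (Term.lam (a.lift 0)) := by
    simpa [Term.subst, K] using Beq.beta (Term.lam (Term.var 1)) a
  have hb : Beq (Term.app (Term.lam (a.lift 0)) b) a := by
    simpa only [Term.subst_lift] using Beq.beta (a.lift 0) b
  exact (hKa.appCongr (.refl b)).trans hb

theorem interp_sub_iff {R R' : Ty} {γ : Env} (hR' : BetaEtaClosed (interp R' γ)) (t t' : Term) :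
    interp (Ty.sub R R') γ t t' ↔ interp R γ ≤ interp R' γ := by
  constructor
  · rintro ⟨u, hu, v, huv, hv⟩ a b hab
    -- `u` and `v` are βη-equal to `K I t` and `K I t'`, i.e. to the identity
    have hua : Beq (Term.app u a) a :=
      ((hu.symm.trans (beq_K_app I t)).appCongr (.refl a)).trans (beq_I_app a)
    have hvb : Beq (Term.app v b) b :=
      ((hv.symm.trans (beq_K_app I t')).appCongr (.refl b)).trans (beq_I_app b)
    exact hR' _ _ _ _ (huv a b hab) hua.symm hvb.symm
  · intro hle
    exact ⟨I, beq_K_app I t, I,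
      fun a b hab => hR' _ _ _ _ (hle a b hab) (beq_I_app a) (beq_I_app b), beq_K_app I t'⟩

theorem interp_imp_iff {R R' : Ty} {γ : Env} (hR' : BetaEtaClosed (interp R' γ)) (t t' : Term) :
    interp (Ty.imp R R') γ t t' ↔ ((∃ a b, interp R γ a b) → interp R' γ t t') := by
  constructor
  · rintro ⟨u, hu, v, huv, hv⟩ ⟨a, b, hab⟩
    have hta : Beq (Term.app u a) t := (hu.symm.appCongr (.refl a)).trans (beq_K_app t a)
    have htb : Beq (Term.app v b) t' := (hv.symm.appCongr (.refl b)).trans (beq_K_app t' b)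
    exact hR' _ _ _ _ (huv a b hab) hta.symm htb.symm
  · intro h
    exact ⟨Term.app K t, .refl _, Term.app K t',
      fun a b hab => hR' _ _ _ _ (h ⟨a, b, hab⟩) (beq_K_app t a) (beq_K_app t' b), .refl _⟩

theorem interp_recTy_iff (R : Ty) (γ : Env) (t t' : Term) :
    interp (recTy R) γ t t' ↔
      ∀ r : Rel, BetaEtaClosed r → interp R (Env.cons r γ) ≤ r → r t t' := by
  refine forall₂_congr fun r hr => ?_
  replace hr : BetaEtaClosed (interp (Ty.var 0) (Env.cons r γ)) := hr
  rw [interp_imp_iff hr]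
  constructor
  · exact fun h hle => h ⟨I, I, (interp_sub_iff hr I I).2 hle⟩
  · rintro h ⟨a, b, hab⟩
    exact h ((interp_sub_iff hr a b).1 hab)

theorem interp_recTy_le {R : Ty} {γ : Env} {r : Rel} (hr : BetaEtaClosed r)
    (hle : interp R (Env.cons r γ) ≤ r) : interp (recTy R) γ ≤ r :=
  fun t t' h => (interp_recTy_iff R γ t t').1 h r hr hle

theorem interp_fold {R : Ty} (hR : OccPol .pos 0 R) (γ : Env) :
    interp R (Env.cons (interp (recTy R) γ) γ) ≤ interp (recTy R) γ :=
  fun t t' h => (interp_recTy_iff R γ t t').2 fun _ hr hle =>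
    hle t t' (monotone_interp_cons hR γ (interp_recTy_le hr hle) t t' h)

theorem interp_unfold {R : Ty} (hR : OccPol .pos 0 R) {γ : Env} (hγ : EnvClosed γ) :
    interp (recTy R) γ ≤ interp R (Env.cons (interp (recTy R) γ) γ) :=
  interp_recTy_le (betaEtaClosed_interp R (.cons (betaEtaClosed_interp _ hγ) hγ))
    (monotone_interp_cons hR γ (interp_fold hR γ))

/-- Rec unfold: if X ∈⁺ R then ⟦Rec X. R⟧_γ ⊆ ⟦[Rec X. R / X]R⟧_γ, and combined
with the fold direction, ⟦Rec X. R⟧_γ = ⟦[Rec X. R / X]R⟧_γ. -/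
theorem rec_unfold (R : Ty) (hR : OccPol .pos 0 R) (γ : Env) (hγ : EnvClosed γ) :
    (∀ t t', interp (recTy R) γ t t' → interp (substTy R 0 (recTy R)) γ t t') ∧
    interp (recTy R) γ = interp (substTy R 0 (recTy R)) γ := by
  have hfix : interp (recTy R) γ = interp (substTy R 0 (recTy R)) γ := by
    rw [interp_substTy_zero]
    exact le_antisymm (interp_unfold hR hγ) (interp_fold hR γ)
  exact ⟨hfix.le, hfix⟩

end RelTT
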